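/- Let γ ≥ 2 and consider the four equiprobable average states ρ̃₍₀,±₎, ρ̃₍₁,±₎ (probabilities 1/4 each) defined by ρ̃₍b,±₎ = (γ/(1+γ))|0⟩⟨0|⊗|b⟩⟨b| + (1/(1+γ))|+⟩⟨+|⊗|±⟩⟨±|. Let Π₍₀,₊₎ (resp. Π₍₁,₋₎) be the projections onto positive (resp. negative) eigenspaces of ρ̃₍₀,₊₎ − ρ̃₍₁,₋₎, and Π₍₁,₊₎, Π₍₀,₋₎ those of ρ̃₍₁,₊₎ − ρ̃₍₀,₋₎. Then the POVM Mω = (1/2)Πω achieves ∑_ω (1/4)Tr(ρ̃ω Mω) = (1/4)(1 + √(1+γ+γ²)/(1+γ)). -/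

import Mathlib

open Matrix ComplexOrder
open scoped Kronecker

noncomputable section

abbrev M2 : Type := Matrix (Fin 2) (Fin 2) ℂ
abbrev M4 : Type := Matrix (Fin 2 × Fin 2) (Fin 2 × Fin 2) ℂ

/-- standard basis kets of ℂ² -/
def ket0 : Fin 2 → ℂ := ![1, 0]
def ket1 : Fin 2 → ℂ := ![0, 1]
/-- |+⟩ = (|0⟩+|1⟩)/√2 -/
def ketP : Fin 2 → ℂ := ![(((Real.sqrt 2)⁻¹ : ℝ) : ℂ), (((Real.sqrt 2)⁻¹ : ℝ) : ℂ)]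
/-- |−⟩ = (|0⟩−|1⟩)/√2 -/
def ketM : Fin 2 → ℂ := ![(((Real.sqrt 2)⁻¹ : ℝ) : ℂ), -(((Real.sqrt 2)⁻¹ : ℝ) : ℂ)]

/-- outer product |v⟩⟨w| -/
def outer {n : Type*} (v w : n → ℂ) : Matrix n n ℂ := Matrix.of fun i j => v i * star (w j)
/-- projector |v⟩⟨v| -/
def proj {n : Type*} (v : n → ℂ) : Matrix n n ℂ := outer v v

/-- tensor product of two qubit vectors -/
def kron2 (v w : Fin 2 → ℂ) : Fin 2 × Fin 2 → ℂ := fun p => v p.1 * w p.2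

/-- partial transpose on the second tensor factor, in the standard basis -/
def PT (A : M4) : M4 := Matrix.of fun p q => A (p.1, q.2) (q.1, p.2)

/-- separability: a sum of tensor products of positive semidefinite operators -/
def Separable (E : M4) : Prop :=
  ∃ (k : ℕ) (X Y : Fin k → M2),
    (∀ i, (X i).PosSemidef ∧ (Y i).PosSemidef) ∧ E = ∑ i, (X i) ⊗ₖ (Y i)

def σ0 : M2 := 1
def σ1 : M2 := !![0, 1; 1, 0]
def σ2 : M2 := !![0, -Complex.I; Complex.I, 0]

/-- Example 2 states (ρ₀, ρ₁, ρ₊ as in Example 1; ρ₋ = |+⟩⟨+|⊗|−⟩⟨−|) -/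
def ρ00' : M4 := proj ket0 ⊗ₖ proj ket0
def ρ01' : M4 := proj ket0 ⊗ₖ proj ket1
def ρPP' : M4 := proj ketP ⊗ₖ proj ketP
def ρPM' : M4 := proj ketP ⊗ₖ proj ketM

/-- average states ρ̃₍b,±₎ = (γ/(1+γ))|0⟩⟨0|⊗|b⟩⟨b| + (1/(1+γ))|+⟩⟨+|⊗|±⟩⟨±| -/
def rt0p (γ : ℝ) : M4 :=
  ((γ / (1 + γ) : ℝ) : ℂ) • (proj ket0 ⊗ₖ proj ket0)
    + ((1 / (1 + γ) : ℝ) : ℂ) • (proj ketP ⊗ₖ proj ketP)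
def rt0m (γ : ℝ) : M4 :=
  ((γ / (1 + γ) : ℝ) : ℂ) • (proj ket0 ⊗ₖ proj ket0)
    + ((1 / (1 + γ) : ℝ) : ℂ) • (proj ketP ⊗ₖ proj ketM)
def rt1p (γ : ℝ) : M4 :=
  ((γ / (1 + γ) : ℝ) : ℂ) • (proj ket0 ⊗ₖ proj ket1)
    + ((1 / (1 + γ) : ℝ) : ℂ) • (proj ketP ⊗ₖ proj ketP)
def rt1m (γ : ℝ) : M4 :=
  ((γ / (1 + γ) : ℝ) : ℂ) • (proj ket0 ⊗ₖ proj ket1)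
    + ((1 / (1 + γ) : ℝ) : ℂ) • (proj ketP ⊗ₖ proj ketM)

/-- `IsSpectralPair A P N` : P and N are the orthogonal projections onto the positive and
negative eigenspaces of the Hermitian operator A (whose eigenvalues are all nonzero, so
that P + N = 1). -/
def IsSpectralPair (A P N : M4) : Prop :=
  P.IsHermitian ∧ N.IsHermitian ∧ P * P = P ∧ N * N = N ∧ P + N = 1
    ∧ P * A = A * P ∧ (A * P).PosSemidef ∧ ((-A) * N).PosSemidef
    ∧ ∀ v : Fin 2 × Fin 2 → ℂ, A *ᵥ v = 0 → P *ᵥ v = 0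

/-! Let `A` be Hermitian with positive and negative spectral projections `P` and `1 - P`.
Then `A (2P - 1)` is positive semidefinite with square `A²`, so it is the positive square root
`|A|`, and `2 Tr(A P) = Tr |A| + Tr A`.

Here `ρ̃₍₀,₊₎ − ρ̃₍₁,₋₎ = (1+γ)⁻¹ B_γ` and `ρ̃₍₁,₊₎ − ρ̃₍₀,₋₎ = (1+γ)⁻¹ B_{−γ}` with the traceless
`B_t = t |0⟩⟨0| ⊗ Z + |+⟩⟨+| ⊗ X`. Its square `Y = B_t²` satisfies
`Y² = (t² + 1) Y − t²/4`, hence `|B_t| = (Y + |t|/2) / √(1 + |t| + t²)`, of trace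
`2 √(1 + |t| + t²)`. Each of the two pairs `ω, ω'` of the POVM then contributes
`(1/8) (Tr ρ̃_ω' + Tr((ρ̃_ω − ρ̃_ω') Π_ω)) = (1/8) (1 + √(1+γ+γ²)/(1+γ))`. -/

theorem Matrix.two_mul_trace_mul_eq_trace_add_trace {n 𝕜 : Type*} [Fintype n] [DecidableEq n]
    [RCLike 𝕜] {A P S : Matrix n n 𝕜} (hPP : P * P = P) (hPA : P * A = A * P)
    (hAP : (A * P).PosSemidef) (hAN : (-A * (1 - P)).PosSemidef)
    (hS : S.PosSemidef) (hSS : S * S = A * A) :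
    2 * (A * P).trace = S.trace + A.trace := by
  set R := P - (1 - P)
  have hRR : R * R = 1 := by
    simp only [R, sub_mul, mul_sub, mul_one, one_mul, hPP]; abel
  have hRA : R * A = A * R := by
    simp only [R, sub_mul, mul_sub, mul_one, one_mul, hPA]
  have hD : A * P + -A * (1 - P) = A * R := by
    rw [neg_mul, ← sub_eq_add_neg, ← mul_sub]
  open scoped MatrixOrder in
  have hAR : A * R = S := by
    refine (CFC.mul_self_eq_mul_self_iff _ _ (hD ▸ hAP.add hAN).nonneg hS.nonneg).1 ?_
    rw [hSS, mul_assoc, ← mul_assoc R, hRA, mul_assoc, hRR, mul_one]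
  have := congrArg trace (hD.trans hAR)
  simp only [trace_add, neg_mul, trace_neg, mul_sub, mul_one, trace_sub] at this
  linear_combination this

theorem Matrix.trace_mul_add_trace_mul_eq {n R : Type*} [Fintype n] [DecidableEq n] [Ring R]
    (A B : Matrix n n R) {P N : Matrix n n R} (h : P + N = 1) :
    (A * P).trace + (B * N).trace = B.trace + ((A - B) * P).trace := by
  rw [eq_sub_of_add_eq' h, mul_sub, mul_one, sub_mul, trace_sub, trace_sub]
  abel

theorem mul_self_inv_smul_add_smul_one {𝕜 A : Type*} [Field 𝕜] [Ring A] [Algebra 𝕜 A] {X : A}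
    {a c r : 𝕜} (hX : X * X = a • X - c ^ 2 • 1) (hr : r * r = a + 2 * c) (hr0 : r ≠ 0) :
    (r⁻¹ • (X + c • 1)) * (r⁻¹ • (X + c • 1)) = X := by
  have hr' : r⁻¹ * r⁻¹ * (a + 2 * c) = 1 := by rw [← hr]; field_simp
  simp only [add_mul, mul_add, smul_mul_assoc, mul_smul_comm, one_mul, mul_one, smul_smul, hX]
  linear_combination (norm := module) hr' • X

def σ3 : M2 := !![1, 0; 0, -1]

theorem isHermitian_proj {n : Type*} (v : n → ℂ) : (proj v).IsHermitian := by
  ext i j; simp [proj, outer, mul_comm]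

theorem isHermitian_σ1 : σ1.IsHermitian := by
  ext i j; fin_cases i <;> fin_cases j <;> simp [σ1]

theorem isHermitian_σ3 : σ3.IsHermitian := by
  ext i j; fin_cases i <;> fin_cases j <;> simp [σ3]

theorem ofReal_sqrt_two_mul_self : ((√2 : ℝ) : ℂ) * (√2 : ℝ) = 2 := by
  rw [← Complex.ofReal_mul, Real.mul_self_sqrt zero_le_two]; norm_num

theorem proj_ket0_eq : proj ket0 = !![1, 0; 0, 0] := by
  ext i j; fin_cases i <;> fin_cases j <;> simp [proj, outer, ket0]

theorem proj_ketP_eq : proj ketP = (1 / 2 : ℂ) • !![1, 1; 1, 1] := by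
  ext i j
  fin_cases i <;> fin_cases j <;> simp [proj, outer, ketP, ← mul_inv, ofReal_sqrt_two_mul_self]

theorem proj_ket0_sub_proj_ket1 : proj ket0 - proj ket1 = σ3 := by
  ext i j; fin_cases i <;> fin_cases j <;> simp [proj, outer, ket0, ket1, σ3]

theorem proj_ketP_sub_proj_ketM : proj ketP - proj ketM = σ1 := by
  ext i j
  fin_cases i <;> fin_cases j <;>
    simp [proj, outer, ketP, ketM, σ1, ← mul_inv, ofReal_sqrt_two_mul_self] <;> norm_num

theorem trace_rt1m {γ : ℝ} (hγ : 1 + γ ≠ 0) : (rt1m γ).trace = 1 := by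
  have : (1 + γ : ℂ) ≠ 0 := by exact_mod_cast hγ
  rw [rt1m, trace_add, trace_smul, trace_smul, trace_kronecker, trace_kronecker]
  simp [trace, proj, outer, ket0, ket1, ketP, ketM, ← mul_inv, ofReal_sqrt_two_mul_self]
  field_simp
  ring

theorem trace_rt0m {γ : ℝ} (hγ : 1 + γ ≠ 0) : (rt0m γ).trace = 1 := by
  have : (1 + γ : ℂ) ≠ 0 := by exact_mod_cast hγ
  rw [rt0m, trace_add, trace_smul, trace_smul, trace_kronecker, trace_kronecker]
  simp [trace, proj, outer, ket0, ketP, ketM, ← mul_inv, ofReal_sqrt_two_mul_self]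
  field_simp
  ring

def helstromOp (t : ℝ) : M4 := (t : ℂ) • (proj ket0 ⊗ₖ σ3) + proj ketP ⊗ₖ σ1

theorem rt0p_sub_rt1m (γ : ℝ) : rt0p γ - rt1m γ = (((1 + γ)⁻¹ : ℝ) : ℂ) • helstromOp γ := by
  rw [helstromOp, ← proj_ket0_sub_proj_ket1, ← proj_ketP_sub_proj_ketM]
  ext ⟨i, a⟩ ⟨j, b⟩
  simp only [rt0p, rt1m, Matrix.sub_apply, Matrix.add_apply, Matrix.smul_apply,
    kroneckerMap_apply, smul_eq_mul]
  push_cast; ring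

theorem rt1p_sub_rt0m (γ : ℝ) : rt1p γ - rt0m γ = (((1 + γ)⁻¹ : ℝ) : ℂ) • helstromOp (-γ) := by
  rw [helstromOp, ← proj_ket0_sub_proj_ket1, ← proj_ketP_sub_proj_ketM]
  ext ⟨i, a⟩ ⟨j, b⟩
  simp only [rt1p, rt0m, Matrix.sub_apply, Matrix.add_apply, Matrix.smul_apply,
    kroneckerMap_apply, smul_eq_mul]
  push_cast; ring

theorem isHermitian_helstromOp (t : ℝ) : (helstromOp t).IsHermitian := by
  rw [IsHermitian, helstromOp, conjTranspose_add, conjTranspose_smul, conjTranspose_kronecker,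
    conjTranspose_kronecker, (isHermitian_proj _).eq, (isHermitian_proj _).eq, isHermitian_σ1.eq,
    isHermitian_σ3.eq, Complex.star_def, Complex.conj_ofReal]

theorem trace_helstromOp (t : ℝ) : (helstromOp t).trace = 0 := by
  rw [helstromOp, trace_add, trace_smul, trace_kronecker, trace_kronecker]
  simp [σ1, σ3, trace]

theorem trace_helstromOp_mul_self (t : ℝ) :
    (helstromOp t * helstromOp t).trace = 2 * t ^ 2 + 2 := by
  rw [helstromOp, proj_ket0_eq, proj_ketP_eq]
  simp [trace, mul_apply, Fintype.sum_prod_type, σ3, σ1]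
  ring

theorem helstromOp_mul_self_mul_self (t : ℝ) :
    helstromOp t * helstromOp t * (helstromOp t * helstromOp t)
      = (t ^ 2 + 1 : ℂ) • (helstromOp t * helstromOp t) - (t ^ 2 / 4 : ℂ) • 1 := by
  rw [helstromOp, proj_ket0_eq, proj_ketP_eq]
  ext ⟨i, a⟩ ⟨j, b⟩
  fin_cases i <;> fin_cases a <;> fin_cases j <;> fin_cases b <;>
    simp [mul_apply, Fintype.sum_prod_type, σ3, σ1, one_apply] <;> ring

theorem exists_posSemidef_mul_self_eq_helstromOp_mul_self (t : ℝ) :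
    ∃ S : M4, S.PosSemidef ∧ S * S = helstromOp t * helstromOp t
      ∧ S.trace = 2 * √(1 + |t| + t ^ 2) := by
  have hs : 0 < √(1 + |t| + t ^ 2) := Real.sqrt_pos.2 (by positivity)
  have hss : (√(1 + |t| + t ^ 2) : ℂ) * √(1 + |t| + t ^ 2) = t ^ 2 + 1 + 2 * (|t| / 2 : ℝ) := by
    rw [← Complex.ofReal_mul, Real.mul_self_sqrt (by positivity)]; push_cast; ring
  have hc : ((|t| / 2 : ℝ) : ℂ) ^ 2 = t ^ 2 / 4 := by
    rw [← Complex.ofReal_pow, div_pow, sq_abs]; push_cast; ring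
  have hBB : (helstromOp t * helstromOp t).PosSemidef := by
    simpa only [(isHermitian_helstromOp t).eq] using
      posSemidef_conjTranspose_mul_self (helstromOp t)
  have hX : helstromOp t * helstromOp t * (helstromOp t * helstromOp t)
      = (t ^ 2 + 1 : ℂ) • (helstromOp t * helstromOp t) - ((|t| / 2 : ℝ) : ℂ) ^ 2 • 1 := by
    rw [hc]; exact helstromOp_mul_self_mul_self t
  refine ⟨((√(1 + |t| + t ^ 2) : ℂ))⁻¹ •
    (helstromOp t * helstromOp t + ((|t| / 2 : ℝ) : ℂ) • 1), ?_, ?_, ?_⟩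
  · rw [← Complex.ofReal_inv]
    exact (hBB.add (PosSemidef.one.smul (by positivity))).smul (by positivity)
  · exact mul_self_inv_smul_add_smul_one hX hss (by exact_mod_cast hs.ne')
  · rw [trace_smul, trace_add, trace_smul, trace_helstromOp_mul_self, trace_one, smul_eq_mul,
      smul_eq_mul, inv_mul_eq_iff_eq_mul₀ (by exact_mod_cast hs.ne')]
    simp only [Fintype.card_prod, Fintype.card_fin]
    push_cast at hss ⊢
    linear_combination (-2) * hss

theorem IsSpectralPair.trace_smul_helstromOp_mul {c t : ℝ} (hc : 0 ≤ c) {P N : M4}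
    (h : IsSpectralPair ((c : ℂ) • helstromOp t) P N) :
    ((c : ℂ) • helstromOp t * P).trace = c * √(1 + |t| + t ^ 2) := by
  obtain ⟨-, -, hPP, -, hPN, hPA, hAP, hAN, -⟩ := h
  obtain ⟨S, hS, hSS, hSt⟩ := exists_posSemidef_mul_self_eq_helstromOp_mul_self t
  have := two_mul_trace_mul_eq_trace_add_trace hPP hPA hAP (eq_sub_of_add_eq' hPN ▸ hAN)
    (hS.smul (Complex.zero_le_real.2 hc)) (by rw [smul_mul_smul_comm, smul_mul_smul_comm, hSS])
  rw [trace_smul, trace_smul, hSt, trace_helstromOp, smul_eq_mul, smul_zero] at this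
  linear_combination this / 2

/-- the POVM Mω = (1/2)Πω built from the Helstrom projections achieves
success probability (1/4)(1 + √(1+γ+γ²)/(1+γ)) on the equiprobable average states. -/
theorem stmt_16 (γ : ℝ) (hγ : 2 ≤ γ)
    (P0p P1m P1p P0m : M4)
    (h1 : IsSpectralPair (rt0p γ - rt1m γ) P0p P1m)
    (h2 : IsSpectralPair (rt1p γ - rt0m γ) P1p P0m) :
    (1/4 : ℂ) * (rt0p γ * ((1/2 : ℂ) • P0p)).trace
      + (1/4 : ℂ) * (rt1m γ * ((1/2 : ℂ) • P1m)).trace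
      + (1/4 : ℂ) * (rt1p γ * ((1/2 : ℂ) • P1p)).trace
      + (1/4 : ℂ) * (rt0m γ * ((1/2 : ℂ) • P0m)).trace
      = (((1/4) * (1 + Real.sqrt (1 + γ + γ^2) / (1 + γ)) : ℝ) : ℂ) := by
  have hγ0 : 0 ≤ γ := by linarith
  have hc : 0 ≤ (1 + γ)⁻¹ := by positivity
  have e1 := trace_mul_add_trace_mul_eq (rt0p γ) (rt1m γ) h1.2.2.2.2.1
  have e2 := trace_mul_add_trace_mul_eq (rt1p γ) (rt0m γ) h2.2.2.2.2.1
  rw [rt0p_sub_rt1m] at e1 h1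
  rw [rt1p_sub_rt0m] at e2 h2
  rw [h1.trace_smul_helstromOp_mul hc, abs_of_nonneg hγ0, trace_rt1m (by positivity)] at e1
  rw [h2.trace_smul_helstromOp_mul hc, abs_neg, abs_of_nonneg hγ0, neg_sq,
    trace_rt0m (by positivity)] at e2
  simp only [Matrix.mul_smul, trace_smul, smul_eq_mul]
  push_cast at e1 e2 ⊢
  linear_combination (e1 + e2) / 8
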